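/- arXiv:2510.10239 — 4 statements merged into one kernel-verified Lean document; each statement's English description precedes it below -/
import Mathlib

section
/- A multiplicative seminorm $|\cdot|$ on a commutative ring $A$ is non-Archimedean (i.e. satisfies the ultrametric inequality $|a+b|\le\max\{|a|,|b|\}$ for all $a,b\in A$) if and only if $|\cdot|$ is bounded on the image of $\mathbb{Z}$ in $A$, i.e. $\sup_{n\in\mathbb{Z}}|n\cdot 1_A|<\infty$. -/
/-!
Ultrametric seminorms are at most `1` on integers. Conversely, if `|n| ≤ B` for all integers `n`,
the binomial theorem gives `|a + b| ^ n ≤ (n + 1) B max(|a|, |b|) ^ n`; a linear factor cannot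
survive against the geometric growth of `(|a + b| / max(|a|, |b|)) ^ n`, so `|a + b| ≤ max(|a|, |b|)`.
-/

open Filter Topology

lemma le_of_forall_pow_le_mul_succ_mul_pow {x M C : ℝ} (hM : 0 ≤ M)
    (h : ∀ n : ℕ, x ^ n ≤ C * (n + 1) * M ^ n) : x ≤ M := by
  by_contra! hMx
  have hx : 0 < x := hM.trans_lt hMx
  set r := M / x
  have hr : r < 1 := (div_lt_one hx).2 hMx
  have hlim : Tendsto (fun n : ℕ ↦ C * (n * r ^ n + r ^ n)) atTop (𝓝 (C * (0 + 0))) :=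
    ((tendsto_self_mul_const_pow_of_lt_one (by positivity) hr).add
      (tendsto_pow_atTop_nhds_zero_of_lt_one (by positivity) hr)).const_mul C
  obtain ⟨n, hn⟩ := (hlim.eventually (gt_mem_nhds (by norm_num : C * (0 + 0) < 1))).exists
  have hbound : C * (n + 1) * M ^ n < x ^ n := calc
    C * (n + 1) * M ^ n = C * (n * r ^ n + r ^ n) * x ^ n := by
      rw [← div_mul_cancel₀ M hx.ne', mul_pow]; ring
    _ < 1 * x ^ n := mul_lt_mul_of_pos_right hn (pow_pos hx n)
    _ = x ^ n := one_mul _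
  exact (h n).not_gt hbound

namespace MulRingSeminorm

variable {A : Type*} [CommRing A] (f : MulRingSeminorm A)

lemma apply_add_pow_le {B : ℝ} (hB : ∀ n : ℕ, f n ≤ B) (a b : A) (n : ℕ) :
    f (a + b) ^ n ≤ B * (n + 1) * max (f a) (f b) ^ n := by
  set M := max (f a) (f b)
  have hterm (k : ℕ) (hk : k ∈ Finset.range (n + 1)) :
      f (a ^ k * b ^ (n - k) * n.choose k) ≤ B * M ^ n := by
    have hkn : k + (n - k) = n := Nat.add_sub_cancel' (Nat.lt_succ_iff.mp (Finset.mem_range.mp hk))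
    calc f (a ^ k * b ^ (n - k) * n.choose k)
        = f a ^ k * f b ^ (n - k) * f (n.choose k) := by simp only [map_mul, map_pow]
      _ ≤ M ^ k * M ^ (n - k) * B := by
          gcongr
          exacts [le_max_left _ _, le_max_right _ _, hB _]
      _ = B * M ^ n := by rw [← pow_add, hkn, mul_comm]
  calc f (a + b) ^ n = f (∑ k ∈ Finset.range (n + 1), a ^ k * b ^ (n - k) * n.choose k) := by
        rw [← map_pow, add_pow]
    _ ≤ ∑ k ∈ Finset.range (n + 1), f (a ^ k * b ^ (n - k) * n.choose k) :=
        Finset.le_sum_of_subadditive f (map_zero f).le (map_add_le_add f) _ _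
    _ ≤ ∑ _k ∈ Finset.range (n + 1), B * M ^ n := Finset.sum_le_sum hterm
    _ = B * (n + 1) * M ^ n := by
        rw [Finset.sum_const, Finset.card_range, nsmul_eq_mul]; push_cast; ring

theorem isNonarchimedean_iff_exists_forall_intCast_le :
    IsNonarchimedean f ↔ ∃ B : ℝ, ∀ n : ℤ, f n ≤ B := by
  refine ⟨fun hna ↦ ⟨1, fun n ↦ hna.apply_intCast_le_one⟩, fun ⟨B, hB⟩ a b ↦ ?_⟩
  refine le_of_forall_pow_le_mul_succ_mul_pow ((apply_nonneg f a).trans (le_max_left _ _))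
    (f.apply_add_pow_le (B := B) (fun n ↦ ?_) a b)
  exact_mod_cast hB n

end MulRingSeminorm

lemma apply_neg_one_eq_one_of_nonneg {A : Type*} [Ring A] {f : A → ℝ} (hnn : ∀ a, 0 ≤ f a)
    (h1 : f 1 = 1) (hmul : ∀ a b, f (a * b) = f a * f b) : f (-1) = 1 := by
  rw [← pow_eq_one_iff_of_nonneg (hnn _) two_ne_zero, sq, ← hmul, neg_one_mul, neg_neg, h1]

def MulRingSeminorm.ofNonneg {A : Type*} [Ring A] (f : A → ℝ) (hnn : ∀ a, 0 ≤ f a)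
    (h0 : f 0 = 0) (h1 : f 1 = 1) (htri : ∀ a b, f (a + b) ≤ f a + f b)
    (hmul : ∀ a b, f (a * b) = f a * f b) : MulRingSeminorm A where
  toFun := f
  map_zero' := h0
  add_le' := htri
  neg' a := by rw [← neg_one_mul, hmul, apply_neg_one_eq_one_of_nonneg hnn h1 hmul, one_mul]
  map_one' := h1
  map_mul' := hmul

/-- A multiplicative seminorm on a commutative ring is non-Archimedean (satisfies
the ultrametric inequality) iff it is bounded on the image of `ℤ`. -/
theorem nonArchimedean_iff_bounded_on_int {A : Type*} [CommRing A]
    (f : A → ℝ)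
    (hnn : ∀ a, 0 ≤ f a)
    (h0 : f 0 = 0) (h1 : f 1 = 1)
    (htri : ∀ a b, f (a + b) ≤ f a + f b)
    (hmul : ∀ a b, f (a * b) = f a * f b) :
    (∀ a b, f (a + b) ≤ max (f a) (f b)) ↔ ∃ B : ℝ, ∀ n : ℤ, f (n : A) ≤ B :=
  (MulRingSeminorm.ofNonneg f hnn h0 h1 htri hmul).isNonarchimedean_iff_exists_forall_intCast_le
end

section
/- Define the hybrid norm on $\mathbb{C}$ by $\|a\|^{\mathrm{hyb}}:=\max\{|a|_\infty,|a|_0\}$, where $|\cdot|_\infty$ is the usual absolute value and $|a|_0=1$ for $a\ne 0$, $|0|_0=0$. Then every multiplicative seminorm $|\cdot|$ on $\mathbb{C}$ with $|a|\le\|a\|^{\mathrm{hyb}}$ for all $a$ is of the form $|\cdot|=|\cdot|_\infty^{\varepsilon}$ for a unique $\varepsilon\in[0,1]$ (with $\varepsilon=0$ interpreted as the trivial absolute value $|\cdot|_0$). -/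
/-! Applying the bound to `a` and to `a⁻¹` squeezes `|a|` between `min ‖a‖ 1` and `max ‖a‖ 1`.
So `|·|` is `1` on the unit circle and only depends on `‖a‖`, and `φ x := log |exp x|` is an
additive map `ℝ → ℝ` with `min x 0 ≤ φ x ≤ max x 0`. Being Lipschitz, `φ` is continuous, hence
`φ x = ε x` with `ε = φ 1 ∈ [0, 1]`, which says `|a| = ‖a‖ ^ ε`. -/

open Real

theorem AddMonoidHom.apply_eq_mul_map_one_of_abs_le (φ : ℝ →+ ℝ) (C : ℝ)
    (h : ∀ x, |φ x| ≤ C * |x|) (x : ℝ) : φ x = x * φ 1 := by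
  simpa using map_real_smul φ (AddMonoidHomClass.continuous_of_bound φ C h) x 1

theorem MonoidHom.map_pos_of_ne_zero {G₀ : Type*} [GroupWithZero G₀] (χ : G₀ →* ℝ)
    (hnn : ∀ a, 0 ≤ χ a) {a : G₀} (ha : a ≠ 0) : 0 < χ a :=
  (hnn a).lt_of_ne' ((Ne.isUnit ha).map χ).ne_zero

namespace MonoidHom

variable (χ : ℂ →* ℝ)

theorem min_norm_one_le_of_le_max (hnn : ∀ a, 0 ≤ χ a) (hbd : ∀ a ≠ 0, χ a ≤ max ‖a‖ 1)
    {a : ℂ} (ha : a ≠ 0) : min ‖a‖ 1 ≤ χ a := by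
  have hχa : 0 < χ a := χ.map_pos_of_ne_zero hnn ha
  have hinv : χ a⁻¹ = (χ a)⁻¹ :=
    eq_inv_of_mul_eq_one_right (by rw [← map_mul, mul_inv_cancel₀ ha, map_one])
  have hbd_inv := hbd a⁻¹ (inv_ne_zero ha)
  rw [hinv, norm_inv, le_max_iff, inv_le_inv₀ hχa (norm_pos_iff.mpr ha), inv_le_one₀ hχa]
    at hbd_inv
  exact min_le_iff.mpr hbd_inv

theorem map_eq_one_of_norm_eq_one (hnn : ∀ a, 0 ≤ χ a) (hbd : ∀ a ≠ 0, χ a ≤ max ‖a‖ 1)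
    {u : ℂ} (hu : ‖u‖ = 1) : χ u = 1 := by
  have hu0 : u ≠ 0 := norm_ne_zero_iff.mp (by rw [hu]; exact one_ne_zero)
  apply le_antisymm
  · simpa [hu] using hbd u hu0
  · simpa [hu] using χ.min_norm_one_le_of_le_max hnn hbd hu0

theorem map_eq_map_norm (hnn : ∀ a, 0 ≤ χ a) (hbd : ∀ a ≠ 0, χ a ≤ max ‖a‖ 1)
    {a : ℂ} (ha : a ≠ 0) : χ a = χ ‖a‖ := by
  have hnorm : (‖a‖ : ℂ) ≠ 0 := by exact_mod_cast norm_ne_zero_iff.mpr ha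
  have hunit : χ (a / ‖a‖) = 1 :=
    χ.map_eq_one_of_norm_eq_one hnn hbd (by simp [norm_ne_zero_iff.mpr ha])
  calc χ a = χ (‖a‖ * (a / ‖a‖)) := by rw [mul_div_cancel₀ _ hnorm]
    _ = χ ‖a‖ := by rw [map_mul, hunit, mul_one]

noncomputable def logExp : ℝ →+ ℝ :=
  AddMonoidHom.mk' (fun x => log (χ (exp x))) fun x y => by
    have hne : ∀ z : ℝ, χ (exp z) ≠ 0 := fun z =>
      ((Ne.isUnit (Complex.ofReal_ne_zero.mpr (exp_ne_zero z))).map χ).ne_zero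
    simp only [exp_add, Complex.ofReal_mul, map_mul, log_mul (hne x) (hne y)]

theorem logExp_apply (x : ℝ) : χ.logExp x = log (χ (exp x)) := rfl

theorem logExp_le_max (hnn : ∀ a, 0 ≤ χ a) (hbd : ∀ a ≠ 0, χ a ≤ max ‖a‖ 1) (x : ℝ) :
    χ.logExp x ≤ max x 0 := by
  have hexp : (exp x : ℂ) ≠ 0 := by exact_mod_cast exp_ne_zero x
  rw [logExp_apply, log_le_iff_le_exp (χ.map_pos_of_ne_zero hnn hexp), exp_monotone.map_max,
    exp_zero]
  simpa [abs_of_pos (exp_pos x)] using hbd _ hexp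

theorem min_le_logExp (hnn : ∀ a, 0 ≤ χ a) (hbd : ∀ a ≠ 0, χ a ≤ max ‖a‖ 1) (x : ℝ) :
    min x 0 ≤ χ.logExp x := by
  have hexp : (exp x : ℂ) ≠ 0 := by exact_mod_cast exp_ne_zero x
  rw [logExp_apply, le_log_iff_exp_le (χ.map_pos_of_ne_zero hnn hexp), exp_monotone.map_min,
    exp_zero]
  simpa [abs_of_pos (exp_pos x)] using χ.min_norm_one_le_of_le_max hnn hbd hexp

theorem abs_logExp_le (hnn : ∀ a, 0 ≤ χ a) (hbd : ∀ a ≠ 0, χ a ≤ max ‖a‖ 1) (x : ℝ) :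
    |χ.logExp x| ≤ |x| :=
  abs_le.mpr
    ⟨(le_min (neg_abs_le x) (neg_nonpos.mpr (abs_nonneg x))).trans (χ.min_le_logExp hnn hbd x),
      (χ.logExp_le_max hnn hbd x).trans (max_le (le_abs_self x) (abs_nonneg x))⟩

theorem logExp_one_mem_Icc (hnn : ∀ a, 0 ≤ χ a) (hbd : ∀ a ≠ 0, χ a ≤ max ‖a‖ 1) :
    χ.logExp 1 ∈ Set.Icc 0 1 := by
  have hneg := χ.logExp_le_max hnn hbd (-1)
  rw [AddMonoidHom.map_neg] at hneg
  exact ⟨by simpa using hneg, by simpa using χ.logExp_le_max hnn hbd 1⟩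

theorem map_ofReal_eq_rpow (hnn : ∀ a, 0 ≤ χ a) (hbd : ∀ a ≠ 0, χ a ≤ max ‖a‖ 1) {r : ℝ}
    (hr : 0 < r) : χ r = r ^ χ.logExp 1 := by
  have hlin := χ.logExp.apply_eq_mul_map_one_of_abs_le 1
    (by simpa only [one_mul] using χ.abs_logExp_le hnn hbd) (log r)
  rw [logExp_apply, exp_log hr] at hlin
  rw [rpow_def_of_pos hr, ← hlin,
    exp_log (χ.map_pos_of_ne_zero hnn (Complex.ofReal_ne_zero.mpr hr.ne'))]

theorem map_eq_norm_rpow (hnn : ∀ a, 0 ≤ χ a) (hbd : ∀ a ≠ 0, χ a ≤ max ‖a‖ 1) {a : ℂ}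
    (ha : a ≠ 0) : χ a = ‖a‖ ^ χ.logExp 1 := by
  rw [χ.map_eq_map_norm hnn hbd ha, χ.map_ofReal_eq_rpow hnn hbd (norm_pos_iff.mpr ha)]

end MonoidHom

theorem hybrid_spectrum_of_C_general (f : ℂ → ℝ)
    (hnn : ∀ a, 0 ≤ f a)
    (h1 : f 1 = 1)
    (hmul : ∀ a b, f (a * b) = f a * f b)
    (hbd : ∀ a : ℂ, f a ≤ max ‖a‖ (if a = 0 then (0 : ℝ) else 1)) :
    ∃! ε : ℝ, ε ∈ Set.Icc (0 : ℝ) 1 ∧ ∀ a : ℂ, a ≠ 0 → f a = ‖a‖ ^ ε := by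
  let χ : ℂ →* ℝ := ⟨⟨f, h1⟩, hmul⟩
  have hχ : ∀ a ≠ 0, χ a ≤ max ‖a‖ 1 := fun a ha =>
    (hbd a).trans_eq (by rw [if_neg ha])
  refine ⟨χ.logExp 1, ⟨χ.logExp_one_mem_Icc hnn hχ, fun a ha => χ.map_eq_norm_rpow hnn hχ ha⟩,
    fun ε ⟨_, hε⟩ => ?_⟩
  have he : (exp 1 : ℂ) ≠ 0 := by exact_mod_cast exp_ne_zero 1
  simpa [Complex.norm_exp, exp_one_rpow] using
    (hε _ he).symm.trans (χ.map_eq_norm_rpow hnn hχ he)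

/-- Every multiplicative seminorm on `ℂ` bounded by the hybrid norm
`max (|·|_∞, |·|_0)` is of the form `|·|_∞ ^ ε` for a unique `ε ∈ [0,1]`
(the case `ε = 0` giving the trivial absolute value on nonzero elements). -/
theorem hybrid_spectrum_of_C (f : ℂ → ℝ)
    (hnn : ∀ a, 0 ≤ f a)
    (h0 : f 0 = 0) (h1 : f 1 = 1)
    (htri : ∀ a b, f (a + b) ≤ f a + f b)
    (hmul : ∀ a b, f (a * b) = f a * f b)
    (hbd : ∀ a : ℂ, f a ≤ max ‖a‖ (if a = 0 then (0 : ℝ) else 1)) :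
    ∃! ε : ℝ, ε ∈ Set.Icc (0 : ℝ) 1 ∧ ∀ a : ℂ, a ≠ 0 → f a = ‖a‖ ^ ε :=
  hybrid_spectrum_of_C_general f hnn h1 hmul hbd
end

section
/- Let $K_r$ be the ring of complex Laurent series $a=\sum_{k\in\mathbb{Z}}a_k t^k$ with $\sum_k\|a_k\|^{\mathrm{hyb}} r^k<\infty$, where $0<r<1$ and $\|\cdot\|^{\mathrm{hyb}}=\max\{|\cdot|_\infty,|\cdot|_0\}$ on $\mathbb{C}$, and define $\|a\|_r^{\mathrm{hyb}}=\sum_k\|a_k\|^{\mathrm{hyb}} r^k$. Then for every $a\in K_r$ and every $t_0$ with $0<|t_0|\le r$, setting $\varepsilon=\log r/\log|t_0|\in(0,1]$, one has $|a(t_0)|^{\varepsilon}\le\|a\|_r^{\mathrm{hyb}}$. -/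
/-
With `s = ‖t₀‖` we have `ε = log_s r`, so `s ^ ε = r` and `0 < ε ≤ 1`. Termwise,
`‖aₖ t₀ᵏ‖ ^ ε = ‖aₖ‖ ^ ε rᵏ ≤ ‖aₖ‖^hyb rᵏ`, because `x ↦ x ^ ε` is at most `1` on `(0, 1]` and at
most `x` on `[1, ∞)`. Since `x ↦ x ^ ε` is monotone and subadditive on `[0, ∞)`,
`|a(t₀)| ^ ε ≤ (∑ ‖aₖ t₀ᵏ‖) ^ ε ≤ ∑ ‖aₖ t₀ᵏ‖ ^ ε`, and summing the termwise bound finishes.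
-/

noncomputable def hybNorm (a : ℂ) : ℝ :=
  max ‖a‖ (if a = 0 then 0 else 1)

namespace Real

variable {ι : Type*} {f : ι → ℝ} {ε : ℝ}

theorem rpow_sum_le_sum_rpow (hf : ∀ i, 0 ≤ f i) (hε0 : 0 < ε) (hε1 : ε ≤ 1) (s : Finset ι) :
    (∑ i ∈ s, f i) ^ ε ≤ ∑ i ∈ s, f i ^ ε :=
  Finset.le_sum_of_subadditive_on_pred (· ^ ε) (0 ≤ ·) (zero_rpow hε0.ne').le
    (fun _ _ hx hy => rpow_add_le_add_rpow hx hy hε0.le hε1) (fun _ _ => add_nonneg) f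
    fun i _ => hf i

theorem rpow_tsum_le_tsum_rpow (hf : ∀ i, 0 ≤ f i) (hε0 : 0 < ε) (hε1 : ε ≤ 1)
    (hsum : Summable f) (hsum_rpow : Summable fun i => f i ^ ε) :
    (∑' i, f i) ^ ε ≤ ∑' i, f i ^ ε :=
  le_of_tendsto' ((continuousAt_rpow_const _ _ (Or.inr hε0.le)).tendsto.comp hsum.hasSum)
    fun s => (rpow_sum_le_sum_rpow hf hε0 hε1 s).trans
      (hsum_rpow.sum_le_tsum s fun i _ => rpow_nonneg (hf i) ε)

theorem summable_of_summable_rpow (hf : ∀ i, 0 ≤ f i) (hε0 : 0 < ε) (hε1 : ε ≤ 1)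
    (hsum_rpow : Summable fun i => f i ^ ε) : Summable f := by
  refine Summable.of_norm_bounded_eventually hsum_rpow ?_
  filter_upwards [hsum_rpow.tendsto_cofinite_zero.eventually (gt_mem_nhds one_pos)] with i hi
  have hfi_le_one : f i ≤ 1 := by
    by_contra! h
    exact (one_le_rpow h.le hε0.le).not_gt hi
  rw [norm_of_nonneg (hf i)]
  exact self_le_rpow_of_le_one (hf i) hfi_le_one hε1

end Real

theorem rpow_norm_le_hybNorm {ε : ℝ} (hε0 : 0 < ε) (hε1 : ε ≤ 1) (z : ℂ) :
    ‖z‖ ^ ε ≤ hybNorm z := by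
  by_cases hz : z = 0
  · simp [hz, hybNorm, Real.zero_rpow hε0.ne']
  rcases le_total ‖z‖ 1 with hle | hge
  · calc ‖z‖ ^ ε ≤ 1 := Real.rpow_le_one (norm_nonneg z) hle hε0.le
      _ ≤ hybNorm z := by simp [hybNorm, hz]
  · exact (Real.rpow_le_self_of_one_le hge hε1).trans (le_max_left _ _)

theorem rpow_norm_mul_zpow_le_hybNorm_mul {ε : ℝ} (hε0 : 0 < ε) (hε1 : ε ≤ 1) (z : ℂ) {w : ℂ}
    (hw : w ≠ 0) (k : ℤ) : ‖z * w ^ k‖ ^ ε ≤ hybNorm z * (‖w‖ ^ ε) ^ k := by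
  have hw_pos : 0 < ‖w‖ := norm_pos_iff.mpr hw
  rw [norm_mul, norm_zpow, Real.mul_rpow (norm_nonneg z) (zpow_nonneg hw_pos.le k),
    ← Real.rpow_intCast, ← Real.rpow_intCast, ← Real.rpow_mul hw_pos.le,
    ← Real.rpow_mul hw_pos.le, mul_comm (k : ℝ)]
  exact mul_le_mul_of_nonneg_right (rpow_norm_le_hybNorm hε0 hε1 z) (by positivity)

/-- For a Laurent series `a = ∑ₖ aₖ tᵏ` with `‖a‖_r^hyb = ∑ₖ ‖aₖ‖^hyb rᵏ < ∞`
(`0 < r < 1`), and any `t₀` with `0 < |t₀| ≤ r`, setting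
`ε = log r / log |t₀|`, one has `|a(t₀)|^ε ≤ ‖a‖_r^hyb`. -/
theorem hybrid_norm_bound (r : ℝ) (hr0 : 0 < r) (hr1 : r < 1)
    (a : ℤ → ℂ)
    (ha : Summable fun k : ℤ => hybNorm (a k) * r ^ k)
    (t0 : ℂ) (ht0 : t0 ≠ 0) (ht0r : ‖t0‖ ≤ r)
    (ε : ℝ) (hε : ε = Real.log r / Real.log ‖t0‖) :
    ‖∑' k : ℤ, a k * t0 ^ k‖ ^ ε ≤ ∑' k : ℤ, hybNorm (a k) * r ^ k := by
  have hε_logb : ε = Real.logb ‖t0‖ r := hε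
  have hs0 : 0 < ‖t0‖ := norm_pos_iff.mpr ht0
  have hs1 : ‖t0‖ < 1 := ht0r.trans_lt hr1
  have hε0 : 0 < ε := hε_logb ▸ Real.logb_pos_of_base_lt_one hs0 hs1 hr0 hr1
  have hε1 : ε ≤ 1 := by
    rw [hε_logb, ← Real.logb_self_eq_one_iff.mpr ⟨hs0.ne', hs1.ne, by linarith⟩]
    exact (Real.logb_le_logb_of_base_lt_one hs0 hs1 hr0 hs0).mpr ht0r
  have hterm (k : ℤ) : ‖a k * t0 ^ k‖ ^ ε ≤ hybNorm (a k) * r ^ k := by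
    simpa only [hε_logb, Real.rpow_logb hs0 hs1.ne hr0] using
      rpow_norm_mul_zpow_le_hybNorm_mul hε0 hε1 (a k) ht0 k
  have hsum_rpow : Summable fun k => ‖a k * t0 ^ k‖ ^ ε :=
    ha.of_nonneg_of_le (fun k => by positivity) hterm
  have hsum : Summable fun k => ‖a k * t0 ^ k‖ :=
    Real.summable_of_summable_rpow (fun k => norm_nonneg _) hε0 hε1 hsum_rpow
  calc ‖∑' k : ℤ, a k * t0 ^ k‖ ^ ε ≤ (∑' k, ‖a k * t0 ^ k‖) ^ ε :=
        Real.rpow_le_rpow (norm_nonneg _) (norm_tsum_le_tsum_norm hsum) hε0.le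
    _ ≤ ∑' k, ‖a k * t0 ^ k‖ ^ ε :=
        Real.rpow_tsum_le_tsum_rpow (fun k => norm_nonneg _) hε0 hε1 hsum hsum_rpow
    _ ≤ ∑' k, hybNorm (a k) * r ^ k := hsum_rpow.tsum_le_tsum hterm ha
end

section
/- Let $f\colon[0,\infty)\to[0,\infty)$ be nonincreasing and right-continuous with $\lim_{t\to\infty}f(t)=0$, and suppose there exists $C>0$ such that $s\,f(t+s)\le C f(t)^2$ for all $t\ge 0$ and $s\in[0,1]$. If $f(0)<1/(2C)$, then $f(t)=0$ for all $t\ge 4C f(0)$. -/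
/-!
Iterate `t ↦ t + 2 C f(t)` from `0`. Taking `s = 2 C f(t)` in the decay inequality
(admissible since `f ≤ f(0) < 1/(2C)`) halves `f` along the iteration, while the potential
`t + 4 C f(t)` does not increase; so every iterate stays below `4 C f(0)`, and monotonicity
bounds `f` beyond that point by `f(0) / 2ⁿ` for every `n`.
-/

noncomputable def decayIterate (f : ℝ → ℝ) (C : ℝ) : ℕ → ℝ
  | 0 => 0
  | n + 1 => decayIterate f C n + 2 * C * f (decayIterate f C n)

lemma le_half_of_mul_le_sq {f : ℝ → ℝ} {C t : ℝ} (hC : 0 < C) (hft : 0 ≤ f t)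
    (hdecay : 2 * C * f t * f (t + 2 * C * f t) ≤ C * f t ^ 2) :
    f (t + 2 * C * f t) ≤ f t / 2 := by
  rcases hft.eq_or_lt with hzero | hpos
  · rw [← hzero, mul_zero, add_zero, ← hzero, zero_div]
  · exact le_of_mul_le_mul_left (hdecay.trans_eq (by ring)) (by positivity)

theorem decayIterate_spec {f : ℝ → ℝ} {C : ℝ} (hC : 0 < C)
    (hnn : ∀ t, 0 ≤ t → 0 ≤ f t)
    (hmono : ∀ s t, 0 ≤ s → s ≤ t → f t ≤ f s)
    (hdecay : ∀ t, 0 ≤ t → ∀ s ∈ Set.Icc (0:ℝ) 1, s * f (t + s) ≤ C * f t ^ 2)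
    (h0 : 2 * C * f 0 ≤ 1) (n : ℕ) :
    0 ≤ decayIterate f C n ∧ f (decayIterate f C n) ≤ f 0 / 2 ^ n ∧
      decayIterate f C n + 4 * C * f (decayIterate f C n) ≤ 4 * C * f 0 := by
  induction n with
  | zero => simp [decayIterate]
  | succ n ih =>
    obtain ⟨hpos, hhalf, hpot⟩ := ih
    set t := decayIterate f C n
    have hft : 0 ≤ f t := hnn t hpos
    have hstep : f (t + 2 * C * f t) ≤ f t / 2 :=
      le_half_of_mul_le_sq hC hft <| hdecay t hpos _
        ⟨by positivity, h0.trans' (by gcongr; exact hmono 0 t le_rfl hpos)⟩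
    refine ⟨by simp only [decayIterate]; positivity, ?_, ?_⟩
    · calc f (decayIterate f C (n + 1)) ≤ f t / 2 := hstep
        _ ≤ f 0 / 2 ^ n / 2 := by gcongr
        _ = f 0 / 2 ^ (n + 1) := by ring
    · calc decayIterate f C (n + 1) + 4 * C * f (decayIterate f C (n + 1))
          ≤ t + 2 * C * f t + 4 * C * (f t / 2) := by simp only [decayIterate]; gcongr
        _ = t + 4 * C * f t := by ring
        _ ≤ 4 * C * f 0 := hpot

theorem decay_lemma_general (f : ℝ → ℝ)
    (hnn : ∀ t, 0 ≤ t → 0 ≤ f t)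
    (hmono : ∀ s t, 0 ≤ s → s ≤ t → f t ≤ f s)
    (C : ℝ) (hC : 0 < C)
    (hdecay : ∀ t, 0 ≤ t → ∀ s ∈ Set.Icc (0:ℝ) 1, s * f (t + s) ≤ C * f t ^ 2)
    (h0 : f 0 < 1 / (2 * C)) :
    ∀ t, 4 * C * f 0 ≤ t → f t = 0 := by
  intro t ht
  have h0' : 2 * C * f 0 ≤ 1 := by
    rw [lt_div_iff₀ (by positivity)] at h0
    linarith
  have hbound (n : ℕ) : f t ≤ f 0 / 2 ^ n := by
    obtain ⟨hpos, hhalf, hpot⟩ := decayIterate_spec hC hnn hmono hdecay h0' n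
    have hle : decayIterate f C n ≤ t :=
      (le_add_of_nonneg_right (by have := hnn _ hpos; positivity)).trans (hpot.trans ht)
    exact (hmono _ _ hpos hle).trans hhalf
  have hlim : Filter.Tendsto (fun n : ℕ => f 0 / 2 ^ n) Filter.atTop (nhds 0) :=
    tendsto_const_nhds.div_atTop (tendsto_pow_atTop_atTop_of_one_lt one_lt_two)
  have hf0 : 0 ≤ f 0 := hnn 0 le_rfl
  have ht0 : 0 ≤ t := le_trans (by positivity) ht
  exact le_antisymm (ge_of_tendsto' hlim hbound) (hnn t ht0)

/-- The elementary decay lemma: if `f : [0,∞) → [0,∞)` is nonincreasing,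
right-continuous, tends to `0` at infinity, and satisfies
`s f(t+s) ≤ C f(t)²` for `t ≥ 0`, `s ∈ [0,1]`, and if `f(0) < 1/(2C)`,
then `f(t) = 0` for all `t ≥ 4 C f(0)`. -/
theorem decay_lemma (f : ℝ → ℝ)
    (hnn : ∀ t, 0 ≤ t → 0 ≤ f t)
    (hmono : ∀ s t, 0 ≤ s → s ≤ t → f t ≤ f s)
    (hrc : ∀ t, 0 ≤ t → ContinuousWithinAt f (Set.Ici t) t)
    (hlim : Filter.Tendsto f Filter.atTop (nhds 0))
    (C : ℝ) (hC : 0 < C)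
    (hdecay : ∀ t, 0 ≤ t → ∀ s ∈ Set.Icc (0:ℝ) 1, s * f (t + s) ≤ C * f t ^ 2)
    (h0 : f 0 < 1 / (2 * C)) :
    ∀ t, 4 * C * f 0 ≤ t → f t = 0 :=
  decay_lemma_general f hnn hmono C hC hdecay h0
end
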